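/- arXiv:1703.02141 — 6 statements merged into one kernel-verified Lean document; each statement's English description precedes it below -/
import Mathlib

section
/- Let q̃ ∈ (0, 1/2) and p̃ = 1 − q̃. On a measurable space carrying an i.i.d. sequence (ũ_t)_{t≥1} of {0,1}-valued random variables, let P0 be the law under which P(ũ_t = 1) = q̃ and P1 the law under which P(ũ_t = 1) = p̃, and set S_t = Σ_{s≤t} (1{ũ_s = 1} − 1{ũ_s = 0}). For positive integers a, b define the stopping time T_{a,b} = inf{t ≥ 1 : S_t = −a or S_t = b}, the false alarm probability α(a,b) = P0(S_{T_{a,b}} = b), and the miss probability β(a,b) = P1(S_{T_{a,b}} = −a). Then for positive integers a, b, a′, b′, if α(a,b) = α(a′,b′) and β(a,b) = β(a′,b′), then a = a′ and b = b′; consequently the stopping times T_{a,b} and T_{a′,b′} coincide pointwise. -/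
/-!
Both error probabilities are exit probabilities of the `±1` walk `S` from `(-a, b)`. Since `P1` is
`P0` with the two letters exchanged, the likelihood ratio of a path of `S` depends only on its
endpoint (Wald's identity); with `r = q̃ / p̃` this gives
`r ^ b * P1(S_T = b) = P0(S_T = b)` and `r ^ a * P0(S_T = -a) = P1(S_T = -a)`.
The walk has nonzero drift, so by the strong law it leaves `(-a, b)` almost surely under both
laws, whence `r ^ b * (1 - β) = α` and `r ^ a * (1 - α) = β`. As `0 < r < 1`, these relations
determine `r ^ a` and `r ^ b`, hence `a` and `b`, from `(α, β)`.
-/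

open MeasureTheory ProbabilityTheory Finset Filter Function
open scoped ENNReal Topology

namespace BoolWalk

def walk (w : ℕ → Bool) (t : ℕ) : ℤ := ∑ s ∈ range t, if w s then 1 else -1

@[simp]
lemma walk_zero (w : ℕ → Bool) : walk w 0 = 0 := by simp [walk]

lemma walk_succ (w : ℕ → Bool) (t : ℕ) :
    walk w (t + 1) = walk w t + if w t then 1 else -1 := by
  simp [walk, sum_range_succ]

lemma walk_congr {w w' : ℕ → Bool} {n t : ℕ} (h : ∀ s < n, w s = w' s) (ht : t ≤ n) :
    walk w t = walk w' t :=
  sum_congr rfl fun s hs => by rw [h s ((mem_range.mp hs).trans_le ht)]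

lemma walk_eq_card_sub_card (w : ℕ → Bool) (n : ℕ) :
    walk w n = #{s ∈ range n | w s} - #{s ∈ range n | ¬w s} := by
  simp [walk, sum_ite, sub_eq_add_neg]

lemma pow_mul_prod_ite_swap {M : Type*} [CommMonoid M] (P Q : M) {w : ℕ → Bool} {n i j : ℕ}
    (hw : walk w n = j - i) :
    Q ^ i * P ^ j * ∏ s ∈ range n, (if w s then Q else P)
      = P ^ i * Q ^ j * ∏ s ∈ range n, (if w s then P else Q) := by
  have hcount : #{s ∈ range n | w s} + i = #{s ∈ range n | ¬w s} + j := by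
    rw [walk_eq_card_sub_card] at hw; omega
  simp only [prod_ite, prod_const]
  calc Q ^ i * P ^ j * (Q ^ #{s ∈ range n | w s} * P ^ #{s ∈ range n | ¬w s})
      = Q ^ (#{s ∈ range n | w s} + i) * P ^ (#{s ∈ range n | ¬w s} + j) := by
        rw [pow_add, pow_add]; ac_rfl
    _ = P ^ (#{s ∈ range n | w s} + i) * Q ^ (#{s ∈ range n | ¬w s} + j) := by
        rw [hcount, mul_comm]
    _ = _ := by rw [pow_add, pow_add]; ac_rfl

def Hits (a b : ℕ) (w : ℕ → Bool) (t : ℕ) : Prop :=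
  1 ≤ t ∧ (walk w t = -a ∨ walk w t = b)

noncomputable def exitTime (a b : ℕ) (w : ℕ → Bool) : ℕ := sInf {t | Hits a b w t}

def IsExitTime (a b : ℕ) (w : ℕ → Bool) (n : ℕ) : Prop :=
  Hits a b w n ∧ ∀ t < n, ¬Hits a b w t

def ExitWord (a b : ℕ) (v : ℤ) (l : List Bool) : Prop :=
  IsExitTime a b (l.getD · false) l.length ∧ walk (l.getD · false) l.length = v

variable {a b : ℕ} {w w' : ℕ → Bool} {n : ℕ}

lemma hits_congr (h : ∀ s < n, w s = w' s) {t : ℕ} (ht : t ≤ n) :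
    Hits a b w t ↔ Hits a b w' t := by
  simp only [Hits, walk_congr h ht]

lemma isExitTime_congr (h : ∀ s < n, w s = w' s) :
    IsExitTime a b w n ↔ IsExitTime a b w' n := by
  simp only [IsExitTime]
  rw [hits_congr h le_rfl]
  refine and_congr_right' (forall₂_congr fun t ht => ?_)
  rw [hits_congr h ht.le]

lemma IsExitTime.exitTime_eq (h : IsExitTime a b w n) : exitTime a b w = n :=
  IsLeast.csInf_eq ⟨h.1, fun t ht => not_lt.mp fun hlt => h.2 t hlt ht⟩

lemma isExitTime_exitTime (h : ∃ t, Hits a b w t) : IsExitTime a b w (exitTime a b w) :=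
  ⟨Nat.sInf_mem h, fun _ ht => Nat.notMem_of_lt_sInf ht⟩

lemma walk_exitTime_eq_iff {v : ℤ} (hv : v ≠ 0) :
    walk w (exitTime a b w) = v ↔ ∃ n, IsExitTime a b w n ∧ walk w n = v := by
  refine ⟨fun h => ⟨_, isExitTime_exitTime ?_, h⟩, fun ⟨n, hn, h⟩ => hn.exitTime_eq ▸ h⟩
  by_contra hnone
  have hempty : {t | Hits a b w t} = ∅ := Set.eq_empty_of_forall_notMem fun t ht => hnone ⟨t, ht⟩
  rw [exitTime, hempty, Nat.sInf_empty, walk_zero] at h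
  exact hv h.symm

lemma walk_mem_Ioo_of_forall_not_hits (ha : 0 < a) (hb : 0 < b) (h : ∀ t, ¬Hits a b w t) (n : ℕ) :
    walk w n ∈ Set.Ioo (-(a : ℤ)) b := by
  induction n with
  | zero => simp only [walk_zero, Set.mem_Ioo]; omega
  | succ n ih =>
    -- unit steps cannot jump over `-a` or `b`
    rw [Set.mem_Ioo] at ih ⊢
    have hn := h (n + 1)
    simp only [Hits, not_and, not_or] at hn
    rw [walk_succ] at hn ⊢
    split_ifs at hn ⊢ <;> omega

lemma exists_hits_of_tendsto (ha : 0 < a) (hb : 0 < b) {c : ℝ} (hc : c ≠ 0)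
    (h : Tendsto (fun n : ℕ => (walk w n : ℝ) / n) atTop (𝓝 c)) : ∃ t, Hits a b w t := by
  by_contra! hnone
  have hbound (n : ℕ) : |(walk w n : ℝ)| ≤ a + b := by
    obtain ⟨hlo, hhi⟩ := walk_mem_Ioo_of_forall_not_hits ha hb hnone n
    have hlo' : -(a : ℝ) < walk w n := by exact_mod_cast hlo
    have hhi' : (walk w n : ℝ) < b := by exact_mod_cast hhi
    rw [abs_le]; constructor <;> linarith [b.cast_nonneg (α := ℝ), a.cast_nonneg (α := ℝ)]
  refine hc (tendsto_nhds_unique h (squeeze_zero_norm (fun n => ?_)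
    (tendsto_const_div_atTop_nhds_zero_nat ((a : ℝ) + b))))
  rw [Real.norm_eq_abs, abs_div, Nat.abs_cast]
  exact div_le_div_of_nonneg_right (hbound n) n.cast_nonneg

section Measure

variable {Ω : Type*} {u : ℕ → Ω → Bool} {a b n : ℕ} {v : ℤ}

def cylinder (u : ℕ → Ω → Bool) (n : ℕ) (w : ℕ → Bool) : Set Ω := {ω | ∀ s < n, u s ω = w s}

lemma cylinder_eq_biInter (u : ℕ → Ω → Bool) (n : ℕ) (w : ℕ → Bool) :
    cylinder u n w = ⋂ s ∈ range n, u s ⁻¹' {w s} := by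
  ext; simp [cylinder]

def exitEvent (u : ℕ → Ω → Bool) (a b : ℕ) (v : ℤ) : Set Ω :=
  {ω | walk (u · ω) (exitTime a b (u · ω)) = v}

lemma ExitWord.of_mem_cylinder {l : List Bool} (hl : ExitWord a b v l) {ω : Ω}
    (hω : ω ∈ cylinder u l.length (l.getD · false)) :
    IsExitTime a b (u · ω) l.length ∧ walk (u · ω) l.length = v := by
  have hagree : ∀ s < l.length, l.getD s false = u s ω := fun s hs => (hω s hs).symm
  exact ⟨(isExitTime_congr hagree).mp hl.1, walk_congr hagree le_rfl ▸ hl.2⟩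

lemma exitEvent_eq_iUnion (hv : v ≠ 0) :
    exitEvent u a b v =
      ⋃ l : {l // ExitWord a b v l}, cylinder u l.1.length (l.1.getD · false) := by
  ext ω
  simp only [exitEvent, Set.mem_ofPred_eq, walk_exitTime_eq_iff hv, Set.mem_iUnion]
  constructor
  · rintro ⟨n, hexit, hwalk⟩
    set l := List.ofFn fun s : Fin n => u s ω
    have hlen : l.length = n := List.length_ofFn
    have hagree : ∀ s < n, u s ω = l.getD s false := fun s hs => by simp [l, hs]
    refine ⟨⟨l, ?_⟩, hlen ▸ hagree⟩
    rw [ExitWord, hlen]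
    exact ⟨(isExitTime_congr hagree).mp hexit, walk_congr hagree le_rfl ▸ hwalk⟩
  · rintro ⟨l, hω⟩
    exact ⟨_, l.2.of_mem_cylinder hω⟩

lemma pairwise_disjoint_cylinder_exitWord :
    Pairwise (Disjoint on fun l : {l // ExitWord a b v l} =>
      cylinder u l.1.length (l.1.getD · false)) := by
  rintro ⟨l, hl⟩ ⟨l', hl'⟩ hne
  refine Set.disjoint_left.mpr fun ω hω hω' => hne ?_
  have hlen : l.length = l'.length := by
    rw [← (hl.of_mem_cylinder hω).1.exitTime_eq, ← (hl'.of_mem_cylinder hω').1.exitTime_eq]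
  refine Subtype.ext (List.ext_getElem hlen fun s hs hs' => ?_)
  rw [← List.getD_eq_getElem _ false, ← List.getD_eq_getElem _ false]
  exact (hω s hs).symm.trans (hω' s hs')

variable [MeasurableSpace Ω] {μ ν : Measure Ω}

lemma measurableSet_cylinder (hu : ∀ t, Measurable (u t)) (n : ℕ) (w : ℕ → Bool) :
    MeasurableSet (cylinder u n w) := by
  rw [cylinder_eq_biInter]
  exact .biInter (Set.to_countable _) fun s _ => hu s (measurableSet_singleton _)

lemma measurableSet_exitEvent (hu : ∀ t, Measurable (u t)) (hv : v ≠ 0) :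
    MeasurableSet (exitEvent u a b v) := by
  rw [exitEvent_eq_iUnion hv]
  exact .iUnion fun _ => measurableSet_cylinder hu _ _

lemma measure_cylinder (hind : iIndepFun u μ) (n : ℕ) (w : ℕ → Bool) :
    μ (cylinder u n w) = ∏ s ∈ range n, μ (u s ⁻¹' {w s}) := by
  rw [cylinder_eq_biInter, hind.measure_inter_preimage_eq_mul _ fun _ _ => measurableSet_singleton _]

lemma pow_mul_measure_cylinder_swap {P Q : ℝ≥0∞} (hμind : iIndepFun u μ) (hνind : iIndepFun u ν)
    (hμ : ∀ t c, μ (u t ⁻¹' {c}) = if c then P else Q)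
    (hν : ∀ t c, ν (u t ⁻¹' {c}) = if c then Q else P)
    {w : ℕ → Bool} {i j : ℕ} (hw : walk w n = j - i) :
    Q ^ i * P ^ j * ν (cylinder u n w) = P ^ i * Q ^ j * μ (cylinder u n w) := by
  simp only [measure_cylinder hμind, measure_cylinder hνind, hμ, hν]
  exact pow_mul_prod_ite_swap P Q hw

/-- Wald's likelihood-ratio identity at the exit time of `(-a, b)`. -/
lemma pow_mul_measure_exitEvent_swap {P Q : ℝ≥0∞} (hu : ∀ t, Measurable (u t))
    (hμind : iIndepFun u μ) (hνind : iIndepFun u ν)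
    (hμ : ∀ t c, μ (u t ⁻¹' {c}) = if c then P else Q)
    (hν : ∀ t c, ν (u t ⁻¹' {c}) = if c then Q else P) {i j : ℕ} (hij : i ≠ j) :
    Q ^ i * P ^ j * ν (exitEvent u a b (j - i)) = P ^ i * Q ^ j * μ (exitEvent u a b (j - i)) := by
  have hv : (j : ℤ) - i ≠ 0 := by omega
  simp only [exitEvent_eq_iUnion hv, measure_iUnion pairwise_disjoint_cylinder_exitWord
    fun _ => measurableSet_cylinder hu _ _, ← ENNReal.tsum_mul_left]
  exact tsum_congr fun l => pow_mul_measure_cylinder_swap hμind hνind hμ hν l.2.2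

lemma identDistrib_of_measure_preimage_eq {f : Bool → ℝ≥0∞} (hu : ∀ t, Measurable (u t))
    (hμ : ∀ t c, μ (u t ⁻¹' {c}) = f c) (t : ℕ) : IdentDistrib (u t) (u 0) μ μ where
  aemeasurable_fst := (hu t).aemeasurable
  aemeasurable_snd := (hu 0).aemeasurable
  map_eq := Measure.ext_iff_singleton.mpr fun c => by
    rw [Measure.map_apply (hu t) (measurableSet_singleton c),
      Measure.map_apply (hu 0) (measurableSet_singleton c), hμ, hμ]

lemma ae_tendsto_walk_div [IsProbabilityMeasure μ] (hu : ∀ t, Measurable (u t))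
    (hind : iIndepFun u μ) (hident : ∀ t, IdentDistrib (u t) (u 0) μ μ) :
    ∀ᵐ ω ∂μ, Tendsto (fun n : ℕ => (walk (u · ω) n : ℝ) / n) atTop
      (𝓝 (μ.real (u 0 ⁻¹' {true}) - μ.real (u 0 ⁻¹' {false}))) := by
  let sign : Bool → ℝ := fun c => if c then 1 else -1
  have hsign : Measurable sign := .of_discrete
  have hint : Integrable (sign ∘ u 0) μ := Integrable.of_finite.comp_measurable (hu 0)
  have hmean : ∫ ω, sign (u 0 ω) ∂μ = μ.real (u 0 ⁻¹' {true}) - μ.real (u 0 ⁻¹' {false}) := by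
    rw [← integral_map (hu 0).aemeasurable hsign.aestronglyMeasurable,
      integral_fintype Integrable.of_finite]
    simp [map_measureReal_apply (hu 0), sign, sub_eq_add_neg]
  have hslln := strong_law_ae_real (fun t => sign ∘ u t) hint
    (fun i j hij => (hind.comp (fun _ => sign) fun _ => hsign).indepFun hij)
    (fun t => (hident t).comp hsign)
  simp only [comp_apply, hmean] at hslln
  filter_upwards [hslln] with ω hω
  simpa [walk, sign] using hω

lemma ae_exists_hits [IsProbabilityMeasure μ] {P Q : ℝ≥0∞} (hu : ∀ t, Measurable (u t))
    (hind : iIndepFun u μ) (hμ : ∀ t c, μ (u t ⁻¹' {c}) = if c then P else Q) (hPQ : P ≠ Q)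
    (ha : 0 < a) (hb : 0 < b) : ∀ᵐ ω ∂μ, ∃ t, Hits a b (u · ω) t := by
  have hdrift : μ.real (u 0 ⁻¹' {true}) - μ.real (u 0 ⁻¹' {false}) ≠ 0 := by
    rw [sub_ne_zero, measureReal_def, measureReal_def, Ne,
      ENNReal.toReal_eq_toReal_iff' (measure_ne_top _ _) (measure_ne_top _ _), hμ, hμ]
    simpa using hPQ
  filter_upwards [ae_tendsto_walk_div hu hind (identDistrib_of_measure_preimage_eq hu hμ)]
    with ω hω
  exact exists_hits_of_tendsto ha hb hdrift hω

lemma measureReal_exitEvent_add_measureReal_exitEvent [IsProbabilityMeasure μ] {P Q : ℝ≥0∞}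
    (hu : ∀ t, Measurable (u t)) (hind : iIndepFun u μ)
    (hμ : ∀ t c, μ (u t ⁻¹' {c}) = if c then P else Q) (hPQ : P ≠ Q) (ha : 0 < a) (hb : 0 < b) :
    μ.real (exitEvent u a b (-a)) + μ.real (exitEvent u a b b) = 1 := by
  have hbot : MeasurableSet (exitEvent u a b (-a)) := measurableSet_exitEvent hu (by omega)
  have htop : MeasurableSet (exitEvent u a b b) := measurableSet_exitEvent hu (by omega)
  have hdisj : Disjoint (exitEvent u a b (-a)) (exitEvent u a b b) :=
    Set.disjoint_left.mpr fun ω (hω : _ = _) (hω' : _ = _) => by omega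
  rw [← measureReal_union hdisj htop, measureReal_def, ENNReal.toReal_eq_one_iff,
    ← mem_ae_iff_prob_eq_one (hbot.union htop)]
  filter_upwards [ae_exists_hits hu hind hμ hPQ ha hb] with ω hω
  exact (isExitTime_exitTime hω).1.2

lemma measure_preimage_bool [IsProbabilityMeasure μ] {f : Ω → Bool} (hf : Measurable f) {q : ℝ}
    (hq : 0 ≤ q) (h : μ {ω | f ω = true} = ENNReal.ofReal q) (c : Bool) :
    μ (f ⁻¹' {c}) = if c then ENNReal.ofReal q else ENNReal.ofReal (1 - q) := by
  have htrue : μ (f ⁻¹' {true}) = ENNReal.ofReal q := h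
  have hfalse : f ⁻¹' {false} = (f ⁻¹' {true})ᶜ := by ext; simp
  cases c
  · rw [if_neg Bool.false_ne_true, hfalse, prob_compl_eq_one_sub (hf (measurableSet_singleton _)),
      htrue, ENNReal.ofReal_sub _ hq, ENNReal.ofReal_one]
  · exact htrue

lemma measureReal_exitEvent_ruin_relations [IsProbabilityMeasure μ] [IsProbabilityMeasure ν]
    {q p : ℝ} (hq : 0 ≤ q) (hp : 0 < p) (hqp : q ≠ p) (hu : ∀ t, Measurable (u t))
    (hμind : iIndepFun u μ) (hνind : iIndepFun u ν)
    (hμ : ∀ t c, μ (u t ⁻¹' {c}) = if c then ENNReal.ofReal q else ENNReal.ofReal p)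
    (hν : ∀ t c, ν (u t ⁻¹' {c}) = if c then ENNReal.ofReal p else ENNReal.ofReal q)
    (ha : 0 < a) (hb : 0 < b) :
    (q / p) ^ b * (1 - ν.real (exitEvent u a b (-a))) = μ.real (exitEvent u a b b) ∧
      (q / p) ^ a * (1 - μ.real (exitEvent u a b b)) = ν.real (exitEvent u a b (-a)) := by
  have hPQ : ENNReal.ofReal q ≠ ENNReal.ofReal p := by
    rwa [Ne, ENNReal.ofReal_eq_ofReal_iff hq hp.le]
  have htop := congrArg ENNReal.toReal <| pow_mul_measure_exitEvent_swap hu hμind hνind hμ hν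
    (a := a) (b := b) (i := 0) (j := b) hb.ne
  have hbot := congrArg ENNReal.toReal <| pow_mul_measure_exitEvent_swap hu hμind hνind hμ hν
    (a := a) (b := b) (i := a) (j := 0) ha.ne'
  simp only [pow_zero, one_mul, mul_one, CharP.cast_eq_zero, sub_zero, zero_sub,
    ENNReal.toReal_mul, ENNReal.toReal_pow, ENNReal.toReal_ofReal hq, ENNReal.toReal_ofReal hp.le,
    ← measureReal_def] at htop hbot
  have hμsum := measureReal_exitEvent_add_measureReal_exitEvent hu hμind hμ hPQ ha hb
  have hνsum := measureReal_exitEvent_add_measureReal_exitEvent hu hνind hν hPQ.symm ha hb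
  have hpb : p ^ b ≠ 0 := pow_ne_zero _ hp.ne'
  have hpa : p ^ a ≠ 0 := pow_ne_zero _ hp.ne'
  constructor
  · rw [div_pow, ← eq_sub_of_add_eq' hνsum, div_mul_eq_mul_div, htop, mul_div_cancel_left₀ _ hpb]
  · rw [div_pow, ← eq_sub_of_add_eq hμsum, div_mul_eq_mul_div, ← hbot, mul_div_cancel_left₀ _ hpa]

end Measure

-- Gambler's-ruin relations: `A`, `B` are the two error probabilities, `x = r ^ a`, `y = r ^ b`.
lemma eq_of_ruin_relations {x y x' y' A B : ℝ} (hx : x < 1) (hy : y < 1)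
    (h₁ : y * (1 - B) = A) (h₂ : x * (1 - A) = B) (h₁' : y' * (1 - B) = A)
    (h₂' : x' * (1 - A) = B) : x = x' ∧ y = y' := by
  have hB : 1 - B ≠ 0 := fun h => by
    have hA : A = 0 := by rw [← h₁, h, mul_zero]
    rw [hA, sub_zero, mul_one] at h₂
    linarith
  have hA : 1 - A ≠ 0 := fun h => by
    have hB : B = 0 := by rw [← h₂, h, mul_zero]
    rw [hB, sub_zero, mul_one] at h₁
    linarith
  exact ⟨mul_right_cancel₀ hA (h₂.trans h₂'.symm), mul_right_cancel₀ hB (h₁.trans h₁'.symm)⟩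

end BoolWalk

open BoolWalk

/-- Theorem 1 of the paper (symmetric stochastic encryption is ineffective):
under encrypted-bit probabilities `q̃ < 1/2` under `P0` and `p̃ = 1 - q̃` under `P1`,
both the LFC's SPRT and the EFC's mismatched SPRT are exit times of the same ±1 random
walk from integer intervals; equality of false alarm and miss probabilities forces the
thresholds, and hence the stopping times, to coincide. -/
theorem stmt_5 {Ω : Type*} [MeasurableSpace Ω]
    (μ0 μ1 : Measure Ω) [IsProbabilityMeasure μ0] [IsProbabilityMeasure μ1]
    (qt pt : ℝ) (hq0 : 0 < qt) (hq1 : qt < 1 / 2) (hpt : pt = 1 - qt)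
    (u : ℕ → Ω → Bool) (humeas : ∀ t, Measurable (u t))
    (hindep0 : iIndepFun u μ0)
    (hindep1 : iIndepFun u μ1)
    (h0 : ∀ t, μ0 {ω | u t ω = true} = ENNReal.ofReal qt)
    (h1 : ∀ t, μ1 {ω | u t ω = true} = ENNReal.ofReal pt)
    (S : ℕ → Ω → ℤ)
    (hS : ∀ t ω, S t ω = ∑ s ∈ Finset.range t, (if u s ω then (1 : ℤ) else -1))
    (T : ℕ → ℕ → Ω → ℕ)
    (hT : ∀ a b ω, T a b ω = sInf {t | 1 ≤ t ∧ (S t ω = -(a : ℤ) ∨ S t ω = (b : ℤ))})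
    (α β : ℕ → ℕ → ℝ≥0∞)
    (hα : ∀ a b, α a b = μ0 {ω | S (T a b ω) ω = (b : ℤ)})
    (hβ : ∀ a b, β a b = μ1 {ω | S (T a b ω) ω = -(a : ℤ)})
    (a b a' b' : ℕ) (ha : 0 < a) (hb : 0 < b) (ha' : 0 < a') (hb' : 0 < b')
    (hαeq : α a b = α a' b') (hβeq : β a b = β a' b') :
    a = a' ∧ b = b' ∧ ∀ ω, T a b ω = T a' b' ω := by
  have hpt0 : 0 < pt := by linarith
  have hμ0 (t : ℕ) (c : Bool) :
      μ0 (u t ⁻¹' {c}) = if c then ENNReal.ofReal qt else ENNReal.ofReal pt := by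
    rw [measure_preimage_bool (humeas t) hq0.le (h0 t), hpt]
  have hμ1 (t : ℕ) (c : Bool) :
      μ1 (u t ⁻¹' {c}) = if c then ENNReal.ofReal pt else ENNReal.ofReal qt := by
    rw [measure_preimage_bool (humeas t) hpt0.le (h1 t), hpt, sub_sub_cancel]
  have hST (a b : ℕ) (ω : Ω) : S (T a b ω) ω = walk (u · ω) (exitTime a b (u · ω)) := by
    simp only [hS, hT]; rfl
  have hrel (a b : ℕ) (ha : 0 < a) (hb : 0 < b) :
      (qt / pt) ^ b * (1 - (β a b).toReal) = (α a b).toReal ∧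
        (qt / pt) ^ a * (1 - (α a b).toReal) = (β a b).toReal := by
    simp only [hα, hβ, hST]
    exact measureReal_exitEvent_ruin_relations hq0.le hpt0 (by linarith) humeas hindep0 hindep1 hμ0 hμ1 ha hb
  have hr0 : 0 < qt / pt := div_pos hq0 hpt0
  have hr1 : qt / pt < 1 := (div_lt_one hpt0).mpr (by linarith)
  obtain ⟨hra, hrb⟩ := eq_of_ruin_relations (pow_lt_one₀ hr0.le hr1 ha.ne')
    (pow_lt_one₀ hr0.le hr1 hb.ne') (hrel a b ha hb).1 (hrel a b ha hb).2
    (hαeq ▸ hβeq ▸ (hrel a' b' ha' hb').1) (hαeq ▸ hβeq ▸ (hrel a' b' ha' hb').2)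
  obtain rfl := pow_right_injective₀ hr0 hr1.ne hra
  obtain rfl := pow_right_injective₀ hr0 hr1.ne hrb
  exact ⟨rfl, rfl, fun _ => rfl⟩
end

section
/- Let q̃ ∈ (0, 1/2), p̃ ∈ (1/2, 1), ν = (1−q̃)/q̃ > 1 and μ = p̃/(1−p̃) > 1. For positive integers a, b define α(a,b) = (ν^a − 1)/(ν^{a+b} − 1), β(a,b) = (μ^b − 1)/(μ^{a+b} − 1), E0(a,b) = (1 − ν^a)·(a+b)/((2q̃−1)·(1 − ν^{a+b})) − a/(2q̃−1), and E1(a,b) = (1 − μ^{−a})·(a+b)/((2p̃−1)·(1 − μ^{−(a+b)})) − a/(2p̃−1). Further define M_E⁰(α,β) = [(1−α)·ln(1/β)/ln μ − α·ln(1/α)/ln ν]/(1−2q̃) and M_E¹(α,β) = [(1−β)·ln(1/α)/ln ν − β·ln(1/β)/ln μ]/(2p̃−1). Then, along any sequences of positive integers with a → ∞ and b → ∞, E0(a,b) − M_E⁰(α(a,b), β(a,b)) → 0 and E1(a,b) − M_E¹(α(a,b), β(a,b)) → 0. -/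
/-!
Both error probabilities are gambler's-ruin probabilities `r = (c^a - 1)/(c^(a+b) - 1)` with
`c > 1`, and `c^b r → 1` as `a → ∞`. Hence `r → 0` and `log(1/r)/log c = b + o(1)`: the ideal
thresholds `log(1/α)/log ν` and `log(1/β)/log μ` are `b + o(1)` and `a + o(1)`. Both exact
expected sample sizes have the form `E = (x(a+b) - a)/s` with `x = α` or `x = 1 - β`, while
`M = (x log(1/α)/log ν - (1-x) log(1/β)/log μ)/s`, so `E - M` is a bounded combination of the
two threshold errors.
-/

open Filter Topology Real

/-- The probability that a `±1` random walk with down/up odds `c`, started at `0`, reaches `b`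
before `-a`. -/
noncomputable def ruinProb (c : ℝ) (a b : ℕ) : ℝ :=
  (c ^ a - 1) / (c ^ (a + b) - 1)

lemma ruinProb_pos {c : ℝ} (hc : 1 < c) {a : ℕ} (ha : a ≠ 0) (b : ℕ) : 0 < ruinProb c a b :=
  div_pos (sub_pos.2 (one_lt_pow₀ hc ha)) (sub_pos.2 (one_lt_pow₀ hc (by omega)))

lemma ruinProb_eq_one_sub_div (c : ℝ) (a b : ℕ) :
    ruinProb c a b = (1 - c ^ a) / (1 - c ^ (a + b)) := by
  rw [ruinProb, ← neg_div_neg_eq, neg_sub, neg_sub]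

lemma pow_mul_ruinProb {c : ℝ} (hc : c ≠ 0) (a b : ℕ) :
    c ^ b * ruinProb c a b = (1 - (c ^ a)⁻¹) / (1 - (c ^ (a + b))⁻¹) := by
  have h : c ^ (a + b) ≠ 0 := pow_ne_zero _ hc
  rw [ruinProb, ← div_div_div_cancel_right₀ h, pow_add]
  field_simp

lemma one_sub_ruinProb_swap {c : ℝ} {a b : ℕ} (h : c ^ (a + b) ≠ 1) :
    1 - ruinProb c b a = c ^ b * ruinProb c a b := by
  have h' : c ^ (a + b) - 1 ≠ 0 := sub_ne_zero.2 h
  rw [ruinProb, ruinProb, add_comm b, one_sub_div h', ← mul_div_assoc, pow_add]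
  ring_nf

lemma one_sub_ruinProb_swap_eq_zpow {c : ℝ} (hc : c ≠ 0) {a b : ℕ} (h : c ^ (a + b) ≠ 1) :
    1 - ruinProb c b a = (1 - c ^ (-(a : ℤ))) / (1 - c ^ (-((a : ℤ) + (b : ℤ)))) := by
  rw [one_sub_ruinProb_swap h, pow_mul_ruinProb hc, ← Nat.cast_add, zpow_neg, zpow_neg,
    zpow_natCast, zpow_natCast]

section Asymptotics

variable {ι : Type*} {l : Filter ι} {c : ℝ} {A B : ι → ℕ}

lemma tendsto_pow_mul_ruinProb (hc : 1 < c) (hA : Tendsto A l atTop) :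
    Tendsto (fun i => c ^ B i * ruinProb c (A i) (B i)) l (𝓝 1) := by
  have hpow : Tendsto (fun n : ℕ => (c ^ n)⁻¹) atTop (𝓝 0) :=
    (tendsto_pow_atTop_atTop_of_one_lt hc).inv_tendsto_atTop
  have hAB : Tendsto (fun i => A i + B i) l atTop :=
    tendsto_atTop_mono (fun i => Nat.le_add_right _ _) hA
  simp only [pow_mul_ruinProb (by positivity : c ≠ 0)]
  have := ((tendsto_const_nhds (x := (1 : ℝ))).sub (hpow.comp hA)).div
    ((tendsto_const_nhds (x := (1 : ℝ))).sub (hpow.comp hAB)) (by norm_num)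
  rwa [sub_zero, div_one] at this

lemma tendsto_ruinProb_zero (hc : 1 < c) (hA : Tendsto A l atTop) (hB : Tendsto B l atTop) :
    Tendsto (fun i => ruinProb c (A i) (B i)) l (𝓝 0) := by
  have hpow : Tendsto (fun i => (c ^ B i)⁻¹) l (𝓝 0) :=
    (tendsto_pow_atTop_atTop_of_one_lt hc).comp hB |>.inv_tendsto_atTop
  have := (tendsto_pow_mul_ruinProb (B := B) hc hA).mul hpow
  rw [one_mul] at this
  refine this.congr fun i => ?_
  rw [mul_comm, ← mul_assoc, inv_mul_cancel₀ (by positivity), one_mul]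

lemma tendsto_log_inv_ruinProb_div_log_sub (hc : 1 < c) (hA : Tendsto A l atTop) :
    Tendsto (fun i => log (1 / ruinProb c (A i) (B i)) / log c - B i) l (𝓝 0) := by
  have hlog : Tendsto (fun i => log (c ^ B i * ruinProb c (A i) (B i))) l (𝓝 0) := by
    simpa using (tendsto_pow_mul_ruinProb hc hA).log one_ne_zero
  have hc' : log c ≠ 0 := (log_pos hc).ne'
  refine (hlog.neg.div_const (log c)).congr' ?_ |>.trans (by simp)
  filter_upwards [hA.eventually_ne_atTop 0] with i hi
  rw [log_mul (by positivity) (ruinProb_pos hc hi _).ne', log_pow, one_div, log_inv]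
  field_simp
  ring

lemma tendsto_mul_add_sub_div_sub_div {x a b a' b' : ι → ℝ} {x₀ : ℝ} (hx : Tendsto x l (𝓝 x₀))
    (ha : Tendsto (fun i => a' i - a i) l (𝓝 0)) (hb : Tendsto (fun i => b' i - b i) l (𝓝 0))
    (s : ℝ) :
    Tendsto (fun i => (x i * (a i + b i) - a i) / s - (x i * b' i - (1 - x i) * a' i) / s)
      l (𝓝 0) := by
  have := ((((tendsto_const_nhds (x := (1 : ℝ))).sub hx).mul ha).sub (hx.mul hb)).div_const s
  rw [mul_zero, mul_zero, sub_zero, zero_div] at this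
  exact this.congr fun i => by ring

end Asymptotics

/-- Part 2 of Theorem 2 of the paper: the exact expected sample sizes `E0, E1` of the
eavesdropper's mismatched SPRT satisfy `E0 = M_E⁰(α,β) + o(1)` and
`E1 = M_E¹(α,β) + o(1)` as the (integer) thresholds tend to infinity. -/
theorem stmt_9 (qt pt : ℝ) (hq : qt ∈ Set.Ioo (0 : ℝ) (1 / 2))
    (hp : pt ∈ Set.Ioo (1 / 2 : ℝ) 1)
    (ν μ : ℝ) (hν : ν = (1 - qt) / qt) (hμ : μ = pt / (1 - pt))
    (α β E0 E1 : ℕ → ℕ → ℝ)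
    (hα : ∀ a b, α a b = (ν ^ a - 1) / (ν ^ (a + b) - 1))
    (hβ : ∀ a b, β a b = (μ ^ b - 1) / (μ ^ (a + b) - 1))
    (hE0 : ∀ a b, E0 a b =
      (1 - ν ^ a) * ((a : ℝ) + (b : ℝ)) / ((2 * qt - 1) * (1 - ν ^ (a + b)))
        - (a : ℝ) / (2 * qt - 1))
    (hE1 : ∀ a b, E1 a b =
      (1 - μ ^ (-(a : ℤ))) * ((a : ℝ) + (b : ℝ)) /
          ((2 * pt - 1) * (1 - μ ^ (-((a : ℤ) + (b : ℤ)))))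
        - (a : ℝ) / (2 * pt - 1))
    (M0 M1 : ℝ → ℝ → ℝ)
    (hM0 : ∀ x y, M0 x y =
      ((1 - x) * (Real.log (1 / y) / Real.log μ) - x * (Real.log (1 / x) / Real.log ν))
        / (1 - 2 * qt))
    (hM1 : ∀ x y, M1 x y =
      ((1 - y) * (Real.log (1 / x) / Real.log ν) - y * (Real.log (1 / y) / Real.log μ))
        / (2 * pt - 1)) :
    ∀ an bn : ℕ → ℕ, (∀ n, 0 < an n) → (∀ n, 0 < bn n) →
      Tendsto an atTop atTop → Tendsto bn atTop atTop →
      Tendsto (fun n => E0 (an n) (bn n) - M0 (α (an n) (bn n)) (β (an n) (bn n)))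
        atTop (nhds 0) ∧
      Tendsto (fun n => E1 (an n) (bn n) - M1 (α (an n) (bn n)) (β (an n) (bn n)))
        atTop (nhds 0) := by
  intro an bn han _ hA hB
  have hν : 1 < ν := by rw [hν, one_lt_div hq.1]; linarith [hq.2]
  have hμ : 1 < μ := by rw [hμ, one_lt_div (by linarith [hp.2])]; linarith [hp.1]
  have hα' : ∀ a b, α a b = ruinProb ν a b := hα
  have hβ' : ∀ a b, β a b = ruinProb μ b a := fun a b => by rw [hβ, ruinProb, add_comm]
  have hLα := tendsto_log_inv_ruinProb_div_log_sub (B := bn) hν hA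
  have hLβ := tendsto_log_inv_ruinProb_div_log_sub (B := an) hμ hB
  constructor
  · refine (tendsto_mul_add_sub_div_sub_div (tendsto_ruinProb_zero hν hA hB) hLβ hLα
      (2 * qt - 1)).congr fun n => ?_
    rw [hE0, hM0, mul_comm (2 * qt - 1), mul_div_mul_comm, ← ruinProb_eq_one_sub_div, hα', hβ',
      ← neg_sub (2 * qt) 1, div_neg]
    ring
  · have hβ1 := (tendsto_const_nhds (x := (1 : ℝ))).sub (tendsto_ruinProb_zero hμ hB hA)
    refine (tendsto_mul_add_sub_div_sub_div hβ1 hLβ hLα (2 * pt - 1)).congr fun n => ?_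
    have hμn : μ ^ (an n + bn n) ≠ 1 := (one_lt_pow₀ hμ (by have := han n; omega)).ne'
    rw [hE1, hM1, mul_comm (2 * pt - 1), mul_div_mul_comm,
      ← one_sub_ruinProb_swap_eq_zpow (by positivity) hμn, hα', hβ']
    ring
end

section
/- Let 0 < q̃ < p̃ < 1 and define H(x,y) = x·ln(x/y) + (1−x)·ln((1−x)/(1−y)) for x, y ∈ (0,1). For α, β ∈ (0,1) with α + β < 1 define M_L⁰(α,β) = [α·ln(α/(1−β)) + (1−α)·ln((1−α)/β)]/H(q̃,p̃) and M_L¹(α,β) = [β·ln(β/(1−α)) + (1−β)·ln((1−β)/α)]/H(p̃,q̃). Then at every such (α,β) all four partial derivatives ∂M_L⁰/∂α, ∂M_L⁰/∂β, ∂M_L¹/∂α, ∂M_L¹/∂β are strictly negative; in particular ∂M_L⁰/∂α and ∂M_L¹/∂β are proportional (with positive proportionality constant) to −ln(1 + (1−α−β)/(αβ)) < 0, and ∂M_L⁰/∂β and ∂M_L¹/∂α are proportional (with positive proportionality constant) to −(1−α−β) < 0. -/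
/-!
Both numerators are binary relative entropies
`D(x ‖ y) = x ln (x / y) + (1 - x) ln ((1 - x) / (1 - y))`:
`M_L⁰(α, β) = D(α ‖ 1 - β) / D(q̃ ‖ p̃)` and `M_L¹(α, β) = D(β ‖ 1 - α) / D(p̃ ‖ q̃)`.
The denominators are positive by Gibbs' inequality. Since
`∂D/∂x = ln (x (1 - y) / (y (1 - x)))` and `∂D/∂y = (y - x) / (y (1 - y))`, differentiating
in the first argument gives `ln (α β / ((1 - α) (1 - β))) = -ln (1 + (1 - α - β) / (α β))`,
and in the second, through `y = 1 - β`, gives `-(1 - α - β) / (β (1 - β))`; both are negative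
because `α + β < 1`.
-/

open Real

noncomputable def binaryKL (x y : ℝ) : ℝ :=
  x * log (x / y) + (1 - x) * log ((1 - x) / (1 - y))

lemma sub_lt_mul_log_div {x y : ℝ} (hx : 0 < x) (hy : 0 < y) (hxy : x ≠ y) :
    x - y < x * log (x / y) := by
  have hlog : log (y / x) < y / x - 1 :=
    log_lt_sub_one_of_pos (div_pos hy hx) (by rwa [ne_eq, div_eq_one_iff_eq hx.ne', eq_comm])
  calc x - y = -(x * (y / x - 1)) := by field_simp; ring
    _ < -(x * log (y / x)) := neg_lt_neg (mul_lt_mul_of_pos_left hlog hx)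
    _ = x * log (x / y) := by rw [← mul_neg, ← log_inv, inv_div]

lemma binaryKL_pos {x y : ℝ} (hx0 : 0 < x) (hx1 : x < 1) (hy0 : 0 < y) (hy1 : y < 1)
    (hxy : x ≠ y) : 0 < binaryKL x y := by
  have h₁ := sub_lt_mul_log_div hx0 hy0 hxy
  have h₂ := sub_lt_mul_log_div (sub_pos.2 hx1) (sub_pos.2 hy1) (by grind)
  rw [binaryKL]
  linarith

lemma hasDerivAt_binaryKL_left {x y : ℝ} (hx0 : x ≠ 0) (hx1 : x ≠ 1) (hy0 : y ≠ 0)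
    (hy1 : y ≠ 1) :
    HasDerivAt (binaryKL · y) (log (x / y) - log ((1 - x) / (1 - y))) x := by
  have hx1' : 1 - x ≠ 0 := sub_ne_zero.2 hx1.symm
  have hy1' : 1 - y ≠ 0 := sub_ne_zero.2 hy1.symm
  have hsub : HasDerivAt (fun t : ℝ => 1 - t) (-1) x := by
    simpa using (hasDerivAt_id x).const_sub 1
  have h₁ := (hasDerivAt_id x).mul (((hasDerivAt_id x).div_const y).log (div_ne_zero hx0 hy0))
  have h₂ := hsub.mul ((hsub.div_const (1 - y)).log (div_ne_zero hx1' hy1'))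
  refine (h₁.add h₂).congr_deriv ?_
  simp only [id_eq]
  field_simp
  ring

lemma hasDerivAt_binaryKL_right {x y : ℝ} (hx0 : x ≠ 0) (hx1 : x ≠ 1) (hy0 : y ≠ 0)
    (hy1 : y ≠ 1) :
    HasDerivAt (binaryKL x ·) ((y - x) / (y * (1 - y))) y := by
  have hx1' : 1 - x ≠ 0 := sub_ne_zero.2 hx1.symm
  have hy1' : 1 - y ≠ 0 := sub_ne_zero.2 hy1.symm
  have hsub : HasDerivAt (fun t : ℝ => 1 - t) (-1) y := by
    simpa using (hasDerivAt_id y).const_sub 1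
  have h₁ := (((hasDerivAt_const y x).div (hasDerivAt_id y) hy0).log
    (div_ne_zero hx0 hy0)).const_mul x
  have h₂ := (((hasDerivAt_const y (1 - x)).div hsub hy1').log
    (div_ne_zero hx1' hy1')).const_mul (1 - x)
  refine (h₁.add h₂).congr_deriv ?_
  simp only [id_eq, Pi.div_apply]
  field_simp
  ring

lemma hasDerivAt_binaryKL_one_sub_left {a b : ℝ} (ha : 0 < a) (hb : 0 < b) (hab : a + b < 1) :
    HasDerivAt (binaryKL · (1 - b)) (-log (1 + (1 - a - b) / (a * b))) a := by
  have h1a : 0 < 1 - a := by linarith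
  have h1b : 0 < 1 - b := by linarith
  have hodds : 1 + (1 - a - b) / (a * b) = (a / (1 - b) / ((1 - a) / b))⁻¹ := by
    field_simp
    ring
  rw [hodds, log_inv, neg_neg, log_div (by positivity) (by positivity)]
  simpa only [sub_sub_cancel] using
    hasDerivAt_binaryKL_left (y := 1 - b) ha.ne' (by linarith) h1b.ne' (by linarith)

lemma hasDerivAt_binaryKL_one_sub_right {a b : ℝ} (ha : 0 < a) (hb : 0 < b) (hab : a + b < 1) :
    HasDerivAt (binaryKL a <| 1 - ·) ((b * (1 - b))⁻¹ * -(1 - a - b)) b := by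
  have hsub : HasDerivAt (fun t : ℝ => 1 - t) (-1) b := by
    simpa using (hasDerivAt_id b).const_sub 1
  have hb1 : 1 - b ≠ 1 := by linarith
  refine ((hasDerivAt_binaryKL_right ha.ne' (by linarith) (by linarith) hb1).comp b hsub)
    |>.congr_deriv ?_
  have : b * (1 - b) ≠ 0 := by nlinarith
  field_simp
  ring

lemma exists_pos_hasDerivAt_div_const {f : ℝ → ℝ} {c v x K : ℝ} (hc : 0 < c) (hK : 0 < K)
    (hf : HasDerivAt f (c * v) x) : ∃ c' > 0, HasDerivAt (fun t => f t / K) (c' * v) x :=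
  ⟨c / K, div_pos hc hK, by simpa only [div_mul_eq_mul_div] using hf.div_const K⟩

lemma deriv_neg_of_exists_pos_mul {f : ℝ → ℝ} {v x : ℝ}
    (hf : ∃ c > 0, HasDerivAt f (c * v) x) (hv : v < 0) : deriv f x < 0 := by
  obtain ⟨c, hc, hf⟩ := hf
  rw [hf.deriv]
  exact mul_neg_of_pos_of_neg hc hv

/-- Equations (54)–(55) of the paper: monotonicity of the leading terms `M_L⁰`, `M_L¹`
of the legitimate fusion center's SPRT expected sample sizes in the prescribed error
probabilities: all four partial derivatives are strictly negative, being positive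
multiples of `−ln(1 + (1−α−β)/(αβ))` and `−(1−α−β)` respectively. -/
theorem stmt_12 (qt pt : ℝ) (h0 : 0 < qt) (h1 : qt < pt) (h2 : pt < 1)
    (H : ℝ → ℝ → ℝ)
    (hH : ∀ x y, H x y = x * Real.log (x / y) + (1 - x) * Real.log ((1 - x) / (1 - y)))
    (M0 M1 : ℝ → ℝ → ℝ)
    (hM0 : ∀ α β, M0 α β =
      (α * Real.log (α / (1 - β)) + (1 - α) * Real.log ((1 - α) / β)) / H qt pt)
    (hM1 : ∀ α β, M1 α β =
      (β * Real.log (β / (1 - α)) + (1 - β) * Real.log ((1 - β) / α)) / H pt qt) :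
    ∀ α β : ℝ, 0 < α → 0 < β → α + β < 1 →
      (∃ c > (0 : ℝ),
        HasDerivAt (fun x => M0 x β) (c * (-Real.log (1 + (1 - α - β) / (α * β)))) α) ∧
      (∃ c > (0 : ℝ), HasDerivAt (fun y => M0 α y) (c * (-(1 - α - β))) β) ∧
      (∃ c > (0 : ℝ), HasDerivAt (fun x => M1 x β) (c * (-(1 - α - β))) α) ∧
      (∃ c > (0 : ℝ),
        HasDerivAt (fun y => M1 α y) (c * (-Real.log (1 + (1 - α - β) / (α * β)))) β) ∧
      -Real.log (1 + (1 - α - β) / (α * β)) < 0 ∧ -(1 - α - β) < 0 ∧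
      deriv (fun x => M0 x β) α < 0 ∧ deriv (fun y => M0 α y) β < 0 ∧
      deriv (fun x => M1 x β) α < 0 ∧ deriv (fun y => M1 α y) β < 0 := by
  intro α β hα hβ hαβ
  obtain rfl : H = binaryKL := funext fun x => funext (hH x)
  have hD0 : 0 < binaryKL qt pt := binaryKL_pos h0 (h1.trans h2) (h0.trans h1) h2 h1.ne
  have hD1 : 0 < binaryKL pt qt := binaryKL_pos (h0.trans h1) h2 h0 (h1.trans h2) h1.ne'
  have hM0 : ∀ a b, M0 a b = binaryKL a (1 - b) / binaryKL qt pt := by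
    intro a b; simp only [hM0, binaryKL, sub_sub_cancel]
  have hM1 : ∀ a b, M1 a b = binaryKL b (1 - a) / binaryKL pt qt := by
    intro a b; simp only [hM1, binaryKL, sub_sub_cancel]
  have hβα : β + α < 1 := by linarith
  have hlog : -log (1 + (1 - α - β) / (α * β)) < 0 :=
    neg_neg_of_pos (log_pos (lt_add_of_pos_right 1 (div_pos (by linarith) (mul_pos hα hβ))))
  have hgap : -(1 - α - β) < 0 := by linarith
  have d₁ := exists_pos_hasDerivAt_div_const one_pos hD0
    ((one_mul (-log _)).symm ▸ hasDerivAt_binaryKL_one_sub_left hα hβ hαβ)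
  have d₂ := exists_pos_hasDerivAt_div_const
    (inv_pos.2 (mul_pos hβ (by linarith))) hD0
    (hasDerivAt_binaryKL_one_sub_right hα hβ hαβ)
  have d₃ := exists_pos_hasDerivAt_div_const
    (inv_pos.2 (mul_pos hα (by linarith))) hD1
    (sub_right_comm 1 β α ▸ hasDerivAt_binaryKL_one_sub_right hβ hα hβα)
  have d₄ := exists_pos_hasDerivAt_div_const one_pos hD1
    ((one_mul (-log _)).symm ▸ hasDerivAt_binaryKL_one_sub_left hβ hα hβα)
  rw [sub_right_comm 1 β α, mul_comm β α] at d₄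
  simp only [hM0, hM1]
  exact ⟨d₁, d₂, d₃, d₄, hlog, hgap, deriv_neg_of_exists_pos_mul d₁ hlog,
    deriv_neg_of_exists_pos_mul d₂ hgap, deriv_neg_of_exists_pos_mul d₃ hgap,
    deriv_neg_of_exists_pos_mul d₄ hlog⟩
end

section
/- Let p, q ∈ (0,1) with p > q, and let ψ0, ψ1 ∈ [0,1] with ψ0 + ψ1 < 1. Define p̃ = (1−ψ0−ψ1)·p + ψ0 and q̃ = (1−ψ0−ψ1)·q + ψ0 (so that 0 < q̃ < p̃ < 1). Then the following two strict inequalities hold: (1−p)·ln( p̃(1−q̃) / (q̃(1−p̃)) ) − (1−q)·(p̃−q̃)/(q̃(1−q̃)) < 0, and −p·ln( p̃(1−q̃) / (q̃(1−p̃)) ) + q·(p̃−q̃)/(q̃(1−q̃)) < 0. Equivalently, the partial derivatives of H(p̃, q̃) = p̃·ln(p̃/q̃) + (1−p̃)·ln((1−p̃)/(1−q̃)) with respect to ψ0 and with respect to ψ1 are both strictly negative. -/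
/-!
Write `L = log (p̃(1 - q̃) / (q̃(1 - p̃)))` for the log-odds ratio of the encrypted bit. By
`1 - r⁻¹ < log r < r - 1` it lies strictly between `(p̃ - q̃)/(p̃(1 - q̃))` and
`(p̃ - q̃)/(q̃(1 - p̃))`. The two inequalities then reduce to `(1 - p)(1 - q̃) ≤ (1 - q)(1 - p̃)` and
`q p̃ ≤ p q̃`, whose differences are `ψ1 (p - q)` and `ψ0 (p - q)`. The derivatives of `H(p̃, q̃)`
in `ψ0` and `ψ1` are exactly the two left-hand sides, by the chain rule.
-/

open Real

noncomputable section

/-- The probability `p̃` of reading `1` after a bit that is `1` with probability `p` is flipped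
`0 ↦ 1` with probability `ψ0` and `1 ↦ 0` with probability `ψ1`. -/
def encryptedProb (ψ0 ψ1 p : ℝ) : ℝ := (1 - ψ0 - ψ1) * p + ψ0

def bernoulliKL (x y : ℝ) : ℝ := x * log (x / y) + (1 - x) * log ((1 - x) / (1 - y))

end

lemma one_sub_inv_lt_log {x : ℝ} (hx : 0 < x) (hx1 : x ≠ 1) : 1 - x⁻¹ < log x := by
  have h := log_lt_sub_one_of_pos (inv_pos.mpr hx) (inv_ne_one.mpr hx1)
  rw [log_inv] at h
  linarith

section OddsRatio

variable {a b : ℝ}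

lemma one_lt_oddsRatio (hb : 0 < b) (hba : b < a) (ha : a < 1) :
    1 < a * (1 - b) / (b * (1 - a)) := by
  rw [one_lt_div (by nlinarith)]
  nlinarith

lemma log_oddsRatio_lt (hb : 0 < b) (hba : b < a) (ha : a < 1) :
    log (a * (1 - b) / (b * (1 - a))) < (a - b) / (b * (1 - a)) := by
  have hr := one_lt_oddsRatio hb hba ha
  calc log (a * (1 - b) / (b * (1 - a)))
      < a * (1 - b) / (b * (1 - a)) - 1 := log_lt_sub_one_of_pos (by linarith) hr.ne'
    _ = (a - b) / (b * (1 - a)) := by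
      have : 1 - a ≠ 0 := by linarith
      field_simp
      ring

lemma lt_log_oddsRatio (hb : 0 < b) (hba : b < a) (ha : a < 1) :
    (a - b) / (a * (1 - b)) < log (a * (1 - b) / (b * (1 - a))) := by
  have hr := one_lt_oddsRatio hb hba ha
  calc (a - b) / (a * (1 - b))
      = 1 - (a * (1 - b) / (b * (1 - a)))⁻¹ := by
        have : 1 - a ≠ 0 := by linarith
        have : 1 - b ≠ 0 := by linarith
        have : a ≠ 0 := by linarith
        field_simp
        ring
    _ < log (a * (1 - b) / (b * (1 - a))) := one_sub_inv_lt_log (by linarith) hr.ne'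

variable {p q : ℝ}

lemma one_sub_mul_log_oddsRatio_sub_lt (hb : 0 < b) (hba : b < a) (ha : a < 1) (hp : p < 1)
    (hpq : (1 - p) * (1 - b) ≤ (1 - q) * (1 - a)) :
    (1 - p) * log (a * (1 - b) / (b * (1 - a))) - (1 - q) * ((a - b) / (b * (1 - b))) < 0 := by
  have hlog := mul_lt_mul_of_pos_left (log_oddsRatio_lt hb hba ha) (sub_pos.mpr hp)
  have : (1 - p) * ((a - b) / (b * (1 - a))) ≤ (1 - q) * ((a - b) / (b * (1 - b))) := by
    rw [mul_div_assoc', mul_div_assoc', div_le_div_iff₀ (by nlinarith) (by nlinarith)]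
    nlinarith [mul_pos hb (sub_pos.mpr hba)]
  linarith

lemma neg_mul_log_oddsRatio_add_lt (hb : 0 < b) (hba : b < a) (ha : a < 1) (hp : 0 < p)
    (hpq : q * a ≤ p * b) :
    -p * log (a * (1 - b) / (b * (1 - a))) + q * ((a - b) / (b * (1 - b))) < 0 := by
  have hlog := mul_lt_mul_of_pos_left (lt_log_oddsRatio hb hba ha) hp
  have : q * ((a - b) / (b * (1 - b))) ≤ p * ((a - b) / (a * (1 - b))) := by
    rw [mul_div_assoc', mul_div_assoc', div_le_div_iff₀ (by nlinarith) (by nlinarith)]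
    nlinarith [mul_pos (sub_pos.mpr (hba.trans ha)) (sub_pos.mpr hba)]
  linarith

end OddsRatio

section EncryptedProb

variable {ψ0 ψ1 p q : ℝ}

lemma encryptedProb_pos (h0 : 0 ≤ ψ0) (hsum : ψ0 + ψ1 < 1) (hp : 0 < p) :
    0 < encryptedProb ψ0 ψ1 p := by
  unfold encryptedProb
  nlinarith

lemma encryptedProb_lt_one (h1 : 0 ≤ ψ1) (hsum : ψ0 + ψ1 < 1) (hp : p < 1) :
    encryptedProb ψ0 ψ1 p < 1 := by
  unfold encryptedProb
  nlinarith

lemma encryptedProb_lt_encryptedProb (hsum : ψ0 + ψ1 < 1) (hqp : q < p) :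
    encryptedProb ψ0 ψ1 q < encryptedProb ψ0 ψ1 p := by
  unfold encryptedProb
  nlinarith

lemma one_sub_mul_one_sub_encryptedProb_le (h1 : 0 ≤ ψ1) (hqp : q ≤ p) :
    (1 - p) * (1 - encryptedProb ψ0 ψ1 q) ≤ (1 - q) * (1 - encryptedProb ψ0 ψ1 p) := by
  have : (1 - q) * (1 - encryptedProb ψ0 ψ1 p) - (1 - p) * (1 - encryptedProb ψ0 ψ1 q)
      = ψ1 * (p - q) := by
    unfold encryptedProb
    ring
  nlinarith

lemma mul_encryptedProb_le (h0 : 0 ≤ ψ0) (hqp : q ≤ p) :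
    q * encryptedProb ψ0 ψ1 p ≤ p * encryptedProb ψ0 ψ1 q := by
  have : p * encryptedProb ψ0 ψ1 q - q * encryptedProb ψ0 ψ1 p = ψ0 * (p - q) := by
    unfold encryptedProb
    ring
  nlinarith

lemma hasDerivAt_encryptedProb_left (ψ0 ψ1 p : ℝ) :
    HasDerivAt (fun x => encryptedProb x ψ1 p) (1 - p) ψ0 := by
  rw [show (fun x => encryptedProb x ψ1 p) = fun x => (1 - p) * x + (1 - ψ1) * p from
    funext fun x => by unfold encryptedProb; ring]
  simpa using ((hasDerivAt_id ψ0).const_mul (1 - p)).add_const ((1 - ψ1) * p)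

lemma hasDerivAt_encryptedProb_right (ψ0 ψ1 p : ℝ) :
    HasDerivAt (fun y => encryptedProb ψ0 y p) (-p) ψ1 := by
  rw [show (fun y => encryptedProb ψ0 y p) = fun y => -p * y + ((1 - ψ0) * p + ψ0) from
    funext fun y => by unfold encryptedProb; ring]
  simpa using ((hasDerivAt_id ψ1).const_mul (-p)).add_const ((1 - ψ0) * p + ψ0)

end EncryptedProb

lemma HasDerivAt.bernoulliKL {P Q : ℝ → ℝ} {c d x : ℝ}
    (hP : HasDerivAt P c x) (hQ : HasDerivAt Q d x)
    (hP0 : P x ≠ 0) (hP1 : P x ≠ 1) (hQ0 : Q x ≠ 0) (hQ1 : Q x ≠ 1) :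
    HasDerivAt (fun t => bernoulliKL (P t) (Q t))
      (c * Real.log (P x * (1 - Q x) / (Q x * (1 - P x)))
        - d * ((P x - Q x) / (Q x * (1 - Q x)))) x := by
  have hP1' : 1 - P x ≠ 0 := sub_ne_zero.mpr hP1.symm
  have hQ1' : 1 - Q x ≠ 0 := sub_ne_zero.mpr hQ1.symm
  have hP' : HasDerivAt (fun t => 1 - P t) (-c) x := by simpa using hP.const_sub 1
  have hQ' : HasDerivAt (fun t => 1 - Q t) (-d) x := by simpa using hQ.const_sub 1
  have hlog := (hP.div hQ hQ0).log (div_ne_zero hP0 hQ0)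
  have hlog' := (hP'.div hQ' hQ1').log (div_ne_zero hP1' hQ1')
  refine ((hP.mul hlog).add (hP'.mul hlog')).congr_deriv ?_
  simp only [Pi.div_apply]
  rw [log_div (mul_ne_zero hP0 hQ1') (mul_ne_zero hQ0 hP1'), log_mul hP0 hQ1',
    log_mul hQ0 hP1', log_div hP0 hQ0, log_div hP1' hQ1']
  field_simp
  ring

/-- The key inequalities of Appendix A of the paper (proof of Lemma 1): the
Kullback–Leibler-type quantity `H(p̃, q̃)` between the encrypted-bit Bernoulli
distributions is strictly decreasing in each flip probability `ψ0` and `ψ1`. -/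
theorem stmt_14 (p q : ℝ) (hp : p ∈ Set.Ioo (0 : ℝ) 1) (hq : q ∈ Set.Ioo (0 : ℝ) 1)
    (hpq : q < p)
    (ψ0 ψ1 : ℝ) (h0 : ψ0 ∈ Set.Icc (0 : ℝ) 1) (h1 : ψ1 ∈ Set.Icc (0 : ℝ) 1)
    (hsum : ψ0 + ψ1 < 1)
    (pt qt : ℝ) (hpt : pt = (1 - ψ0 - ψ1) * p + ψ0) (hqt : qt = (1 - ψ0 - ψ1) * q + ψ0)
    (H : ℝ → ℝ → ℝ)
    (hH : ∀ x y, H x y = x * Real.log (x / y) + (1 - x) * Real.log ((1 - x) / (1 - y))) :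
    (1 - p) * Real.log (pt * (1 - qt) / (qt * (1 - pt)))
        - (1 - q) * ((pt - qt) / (qt * (1 - qt))) < 0 ∧
    (-p) * Real.log (pt * (1 - qt) / (qt * (1 - pt)))
        + q * ((pt - qt) / (qt * (1 - qt))) < 0 ∧
    (∃ d < (0 : ℝ),
      HasDerivAt (fun x => H ((1 - x - ψ1) * p + x) ((1 - x - ψ1) * q + x)) d ψ0) ∧
    (∃ d < (0 : ℝ),
      HasDerivAt (fun y => H ((1 - ψ0 - y) * p + ψ0) ((1 - ψ0 - y) * q + ψ0)) d ψ1) := by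
  obtain ⟨hp0, hp1⟩ := hp
  obtain rfl : pt = encryptedProb ψ0 ψ1 p := hpt
  obtain rfl : qt = encryptedProb ψ0 ψ1 q := hqt
  obtain rfl : H = bernoulliKL := funext₂ hH
  have hqt0 := encryptedProb_pos (ψ1 := ψ1) h0.1 hsum hq.1
  have hpt1 := encryptedProb_lt_one (ψ0 := ψ0) h1.1 hsum hp1
  have hqpt := encryptedProb_lt_encryptedProb hsum hpq
  have hψ0_neg := one_sub_mul_log_oddsRatio_sub_lt hqt0 hqpt hpt1 hp1
    (one_sub_mul_one_sub_encryptedProb_le h1.1 hpq.le)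
  have hψ1_neg := neg_mul_log_oddsRatio_add_lt hqt0 hqpt hpt1 hp0
    (mul_encryptedProb_le h0.1 hpq.le)
  refine ⟨hψ0_neg, hψ1_neg, ⟨_, hψ0_neg, ?_⟩, ⟨_, hψ1_neg, ?_⟩⟩
  · exact (hasDerivAt_encryptedProb_left ψ0 ψ1 p).bernoulliKL
      (hasDerivAt_encryptedProb_left ψ0 ψ1 q) (hqt0.trans hqpt).ne' hpt1.ne hqt0.ne'
      (hqpt.trans hpt1).ne
  · refine ((hasDerivAt_encryptedProb_right ψ0 ψ1 p).bernoulliKL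
      (hasDerivAt_encryptedProb_right ψ0 ψ1 q) (hqt0.trans hqpt).ne' hpt1.ne hqt0.ne'
      (hqpt.trans hpt1).ne).congr_deriv ?_
    ring
end

section
/- Let p̃, q̃ ∈ (0,1) and define H(x,y) = x·ln(x/y) + (1−x)·ln((1−x)/(1−y)) for x, y ∈ (0,1). Then: (i) (1−2q̃)·ln(p̃/(1−p̃)) ≤ H(q̃, p̃), with equality if and only if p̃ + q̃ = 1; and (ii) (2p̃−1)·ln((1−q̃)/q̃) ≤ H(p̃, q̃), with equality if and only if p̃ + q̃ = 1. -/
/-!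
Both differences are binary Kullback–Leibler divergences:
`H(q̃, p̃) - (1 - 2q̃) ln(p̃/(1 - p̃)) = D(q̃ ‖ 1 - p̃)` and
`H(p̃, q̃) - (2p̃ - 1) ln((1 - q̃)/q̃) = D(p̃ ‖ 1 - q̃)`, since replacing the second argument `b`
of `D(a ‖ b)` by `1 - b` changes it by `(2a - 1) ln((1 - b)/b)`. Gibbs' inequality then gives both
bounds, with equality exactly when `q̃ = 1 - p̃`. Here `D` is `binKL`.
-/

open Real InformationTheory

noncomputable def binKL (a b : ℝ) : ℝ :=
  a * log (a / b) + (1 - a) * log ((1 - a) / (1 - b))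

lemma binKL_eq_klFun {a b : ℝ} (hb0 : b ≠ 0) (hb1 : b ≠ 1) :
    binKL a b = b * klFun (a / b) + (1 - b) * klFun ((1 - a) / (1 - b)) := by
  have hb1' : 1 - b ≠ 0 := sub_ne_zero.mpr hb1.symm
  unfold binKL klFun
  field_simp
  ring

lemma binKL_nonneg {a b : ℝ} (ha0 : 0 ≤ a) (ha1 : a ≤ 1) (hb0 : 0 < b) (hb1 : b < 1) :
    0 ≤ binKL a b := by
  rw [binKL_eq_klFun hb0.ne' hb1.ne]
  have hb1' : 0 < 1 - b := sub_pos.mpr hb1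
  exact add_nonneg (mul_nonneg hb0.le (klFun_nonneg (by positivity)))
    (mul_nonneg hb1'.le (klFun_nonneg (div_nonneg (sub_nonneg.mpr ha1) hb1'.le)))

lemma binKL_eq_zero_iff {a b : ℝ} (ha0 : 0 ≤ a) (ha1 : a ≤ 1) (hb0 : 0 < b) (hb1 : b < 1) :
    binKL a b = 0 ↔ a = b := by
  have hb1' : 0 < 1 - b := sub_pos.mpr hb1
  have hfirst : 0 ≤ b * klFun (a / b) := mul_nonneg hb0.le (klFun_nonneg (by positivity))
  have hsecond : 0 ≤ (1 - b) * klFun ((1 - a) / (1 - b)) :=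
    mul_nonneg hb1'.le (klFun_nonneg (div_nonneg (sub_nonneg.mpr ha1) hb1'.le))
  rw [binKL_eq_klFun hb0.ne' hb1.ne]
  constructor
  · intro hsum
    have hzero : klFun (a / b) = 0 :=
      (mul_eq_zero.mp (by linarith)).resolve_left hb0.ne'
    rw [klFun_eq_zero_iff (by positivity), div_eq_one_iff_eq hb0.ne'] at hzero
    exact hzero
  · rintro rfl
    simp [div_self hb0.ne', div_self hb1'.ne', klFun_one]

lemma binKL_sub_binKL_one_sub {a b : ℝ} (ha0 : a ≠ 0) (ha1 : a ≠ 1) (hb0 : b ≠ 0)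
    (hb1 : b ≠ 1) :
    binKL a b - binKL a (1 - b) = (2 * a - 1) * log ((1 - b) / b) := by
  have ha1' : 1 - a ≠ 0 := sub_ne_zero.mpr ha1.symm
  have hb1' : 1 - b ≠ 0 := sub_ne_zero.mpr hb1.symm
  unfold binKL
  rw [sub_sub_cancel, log_div ha0 hb0, log_div ha1' hb1', log_div ha0 hb1', log_div ha1' hb0,
    log_div hb1' hb0]
  ring

/-- Key inequalities in the proof of part 1 of Lemma 2 of the paper:
`(1−2q̃)·ln(p̃/(1−p̃)) ≤ H(q̃,p̃)` and `(2p̃−1)·ln((1−q̃)/q̃) ≤ H(p̃,q̃)`, each with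
equality if and only if `p̃ + q̃ = 1`. -/
theorem stmt_16 (pt qt : ℝ) (hp : pt ∈ Set.Ioo (0 : ℝ) 1) (hq : qt ∈ Set.Ioo (0 : ℝ) 1)
    (H : ℝ → ℝ → ℝ)
    (hH : ∀ x y, H x y = x * Real.log (x / y) + (1 - x) * Real.log ((1 - x) / (1 - y))) :
    ((1 - 2 * qt) * Real.log (pt / (1 - pt)) ≤ H qt pt ∧
      ((1 - 2 * qt) * Real.log (pt / (1 - pt)) = H qt pt ↔ pt + qt = 1)) ∧
    ((2 * pt - 1) * Real.log ((1 - qt) / qt) ≤ H pt qt ∧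
      ((2 * pt - 1) * Real.log ((1 - qt) / qt) = H pt qt ↔ pt + qt = 1)) := by
  obtain ⟨hp0, hp1⟩ := hp
  obtain ⟨hq0, hq1⟩ := hq
  have hH' : H = binKL := funext₂ hH
  subst hH'
  have hp1' : 0 < 1 - pt := sub_pos.mpr hp1
  have hq1' : 0 < 1 - qt := sub_pos.mpr hq1
  have hqp : binKL qt pt - (1 - 2 * qt) * log (pt / (1 - pt)) = binKL qt (1 - pt) := by
    have h := binKL_sub_binKL_one_sub hq0.ne' hq1.ne hp1'.ne' (by linarith)
    rw [sub_sub_cancel] at h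
    linarith
  have hpq : binKL pt qt - (2 * pt - 1) * log ((1 - qt) / qt) = binKL pt (1 - qt) := by
    linarith [binKL_sub_binKL_one_sub hp0.ne' hp1.ne hq0.ne' hq1.ne]
  refine ⟨⟨?_, ?_⟩, ⟨?_, ?_⟩⟩
  · rw [← sub_nonneg, hqp]
    exact binKL_nonneg hq0.le hq1.le hp1' (by linarith)
  · rw [eq_comm, ← sub_eq_zero, hqp, binKL_eq_zero_iff hq0.le hq1.le hp1' (by linarith)]
    constructor <;> intro h <;> linarith
  · rw [← sub_nonneg, hpq]
    exact binKL_nonneg hp0.le hp1.le hq1' (by linarith)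
  · rw [eq_comm, ← sub_eq_zero, hpq, binKL_eq_zero_iff hp0.le hp1.le hq1' (by linarith)]
    constructor <;> intro h <;> linarith
end

section
/- Let p ∈ (1/2, 1), q = 1 − p, and α*, β* ∈ (0,1). For (ψ0, ψ1) ∈ [0,1]² define p̃ = (1−ψ0−ψ1)·p + ψ0 and q̃ = (1−ψ0−ψ1)·q + ψ0, and assume p̃ > 1/2 and q̃ < 1/2. Define H(x,y) = x·ln(x/y) + (1−x)·ln((1−x)/(1−y)), T̂_L⁰ = ln(1/β*)/H(q̃,p̃), T̂_L¹ = ln(1/α*)/H(p̃,q̃), T̂_E⁰ = ln(1/β*)/((1−2q̃)·ln(p̃/(1−p̃))), and T̂_E¹ = ln(1/α*)/((2p̃−1)·ln((1−q̃)/q̃)). Then T̂_E⁰ − T̂_L⁰ ≥ 0 and T̂_E¹ − T̂_L¹ ≥ 0, and in each case equality holds if and only if ψ0 = ψ1. -/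
private lemma log_term (z w : ℝ) (hz : 0 < z) (hw : 0 < w) :
    z - w ≤ z * Real.log (z / w) := by
  have h := Real.log_le_sub_one_of_pos (div_pos hw hz)
  have e : Real.log (z / w) = - Real.log (w / z) := by rw [← Real.log_inv, inv_div]
  have h2 : z * Real.log (w / z) ≤ z * (w / z - 1) := mul_le_mul_of_nonneg_left h hz.le
  have h3 : z * (w / z - 1) = w - z := by field_simp
  rw [e, mul_neg]; linarith

private lemma log_term_strict (z w : ℝ) (hz : 0 < z) (hw : 0 < w) (hne : z ≠ w) :
    z - w < z * Real.log (z / w) := by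
  have hne' : w / z ≠ 1 := by
    intro h; exact hne ((div_eq_one_iff_eq hz.ne').mp h).symm
  have h := Real.log_lt_sub_one_of_pos (div_pos hw hz) hne'
  have e : Real.log (z / w) = - Real.log (w / z) := by rw [← Real.log_inv, inv_div]
  have h2 : z * Real.log (w / z) < z * (w / z - 1) := by
    exact (mul_lt_mul_iff_right₀ hz).mpr h
  have h3 : z * (w / z - 1) = w - z := by field_simp
  rw [e, mul_neg]; linarith

private lemma kl_nonneg (x y : ℝ) (hx0 : 0 < x) (hx1 : x < 1) (hy0 : 0 < y) (hy1 : y < 1) :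
    0 ≤ x * Real.log (x / y) + (1 - x) * Real.log ((1 - x) / (1 - y)) ∧
    (x * Real.log (x / y) + (1 - x) * Real.log ((1 - x) / (1 - y)) = 0 ↔ x = y) := by
  have h1x : (0:ℝ) < 1 - x := by linarith
  have h1y : (0:ℝ) < 1 - y := by linarith
  have t1 := log_term x y hx0 hy0
  have t2 := log_term (1 - x) (1 - y) h1x h1y
  refine ⟨by linarith, ?_, ?_⟩
  · intro h
    by_contra hne
    have t1' := log_term_strict x y hx0 hy0 hne
    linarith
  · intro h
    subst h
    rw [div_self hx0.ne', div_self h1x.ne']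
    simp

private lemma main_step (L a b : ℝ) (hL : 0 < L) (hb0 : 0 < b) (hb : b < 1/2)
    (ha : 1/2 < a) (ha1 : a < 1) :
    0 ≤ L / ((1 - 2 * b) * Real.log (a / (1 - a))) -
        L / (b * Real.log (b / a) + (1 - b) * Real.log ((1 - b) / (1 - a))) ∧
    (L / ((1 - 2 * b) * Real.log (a / (1 - a))) -
        L / (b * Real.log (b / a) + (1 - b) * Real.log ((1 - b) / (1 - a))) = 0 ↔ b = 1 - a) := by
  have hb1 : b < 1 := by linarith
  have ha0 : (0:ℝ) < a := by linarith
  have h1a0 : (0:ℝ) < 1 - a := by linarith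
  have h1a1 : 1 - a < 1 := by linarith
  have h1b0 : (0:ℝ) < 1 - b := by linarith
  have KL1 := kl_nonneg b a hb0 hb1 ha0 ha1
  have KL2 := kl_nonneg b (1 - a) hb0 hb1 h1a0 h1a1
  rw [sub_sub_cancel] at KL2
  obtain ⟨A, hAdef⟩ : ∃ A, A = b * Real.log (b / a) + (1 - b) * Real.log ((1 - b) / (1 - a)) :=
    ⟨_, rfl⟩
  obtain ⟨B, hBdef⟩ : ∃ B, B = (1 - 2 * b) * Real.log (a / (1 - a)) := ⟨_, rfl⟩
  rw [← hAdef, ← hBdef]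
  rw [← hAdef] at KL1
  have hbna : b ≠ a := by intro h; rw [h] at hb; linarith
  have hA : 0 < A := lt_of_le_of_ne KL1.1 (fun h => hbna (KL1.2.mp h.symm))
  -- note: hdiff below is stated via hAdef, hBdef
  have hB : 0 < B := by
    rw [hBdef]
    apply mul_pos (by linarith)
    apply Real.log_pos
    rw [lt_div_iff₀ h1a0]; linarith
  have hdiff : A - B =
      b * Real.log (b / (1 - a)) + (1 - b) * Real.log ((1 - b) / a) := by
    rw [hAdef, hBdef, Real.log_div hb0.ne' ha0.ne', Real.log_div h1b0.ne' h1a0.ne',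
      Real.log_div ha0.ne' h1a0.ne', Real.log_div hb0.ne' h1a0.ne',
      Real.log_div h1b0.ne' ha0.ne']
    ring
  have hAB : B ≤ A := by linarith [KL2.1]
  rw [div_sub_div _ _ hB.ne' hA.ne']
  constructor
  · apply div_nonneg
    · nlinarith
    · exact (mul_pos hB hA).le
  · rw [div_eq_zero_iff]
    constructor
    · rintro (h | h)
      · have h' : L * (A - B) = 0 := by linear_combination h
        rcases mul_eq_zero.mp h' with h'' | h''
        · exact absurd h'' hL.ne'
        · exact KL2.2.mp (by linarith)
      · exact absurd h (mul_pos hB hA).ne'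
    · intro h
      left
      have := KL2.2.mpr h
      have h2 : A - B = 0 := by linarith
      linear_combination L * h2

/-- Part 1 of Lemma 2 of the paper: in the asymptotic regime the eavesdropper's
mismatched SPRT needs at least as many samples as the legitimate fusion center's SPRT
under each hypothesis, with equality precisely for symmetric encryptions `ψ0 = ψ1`. -/
theorem stmt_17 (p : ℝ) (hp : 1 / 2 < p) (hp1 : p < 1) (q : ℝ) (hq : q = 1 - p)
    (αs βs : ℝ) (hαs : αs ∈ Set.Ioo (0 : ℝ) 1) (hβs : βs ∈ Set.Ioo (0 : ℝ) 1)
    (ψ0 ψ1 : ℝ) (h0 : ψ0 ∈ Set.Icc (0 : ℝ) 1) (h1 : ψ1 ∈ Set.Icc (0 : ℝ) 1)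
    (pt qt : ℝ) (hpt : pt = (1 - ψ0 - ψ1) * p + ψ0) (hqt : qt = (1 - ψ0 - ψ1) * q + ψ0)
    (hpt2 : 1 / 2 < pt) (hqt2 : qt < 1 / 2)
    (H : ℝ → ℝ → ℝ)
    (hH : ∀ x y, H x y = x * Real.log (x / y) + (1 - x) * Real.log ((1 - x) / (1 - y)))
    (TL0 TL1 TE0 TE1 : ℝ)
    (hTL0 : TL0 = Real.log (1 / βs) / H qt pt)
    (hTL1 : TL1 = Real.log (1 / αs) / H pt qt)
    (hTE0 : TE0 = Real.log (1 / βs) / ((1 - 2 * qt) * Real.log (pt / (1 - pt))))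
    (hTE1 : TE1 = Real.log (1 / αs) / ((2 * pt - 1) * Real.log ((1 - qt) / qt))) :
    (0 ≤ TE0 - TL0 ∧ (TE0 - TL0 = 0 ↔ ψ0 = ψ1)) ∧
    (0 ≤ TE1 - TL1 ∧ (TE1 - TL1 = 0 ↔ ψ0 = ψ1)) := by
  -- basic range facts
  obtain ⟨hψ00, hψ01⟩ := h0
  obtain ⟨hψ10, hψ11⟩ := h1
  have hc : 0 < 1 - ψ0 - ψ1 := by
    have hdq : pt - qt = (1 - ψ0 - ψ1) * (2 * p - 1) := by rw [hpt, hqt, hq]; ring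
    nlinarith
  have hqt0 : 0 < qt := by
    have : qt = (1 - ψ0 - ψ1) * (1 - p) + ψ0 := by rw [hqt, hq]
    nlinarith
  have hpt1 : pt < 1 := by nlinarith [hpt]
  have hsum : pt + qt - 1 = ψ0 - ψ1 := by rw [hpt, hqt, hq]; ring
  have hLβ : 0 < Real.log (1 / βs) := by
    rw [one_div, Real.log_inv]
    exact neg_pos.2 (Real.log_neg hβs.1 hβs.2)
  have hLα : 0 < Real.log (1 / αs) := by
    rw [one_div, Real.log_inv]
    exact neg_pos.2 (Real.log_neg hαs.1 hαs.2)
  constructor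
  · -- case H0
    have key := main_step (Real.log (1 / βs)) pt qt hLβ hqt0 hqt2 hpt2 hpt1
    rw [hTE0, hTL0, hH]
    exact ⟨key.1, key.2.trans (by constructor <;> (intro h; linarith))⟩
  · -- case H1
    have key := main_step (Real.log (1 / αs)) (1 - qt) (1 - pt) hLα
      (by linarith) (by linarith) (by linarith) (by linarith)
    rw [sub_sub_cancel, sub_sub_cancel] at key
    have e1 : (1:ℝ) - 2 * (1 - pt) = 2 * pt - 1 := by ring
    rw [e1, add_comm ((1 - pt) * Real.log ((1 - pt) / (1 - qt)))] at key
    rw [hTE1, hTL1, hH]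
    exact ⟨key.1, key.2.trans (by constructor <;> (intro h; linarith))⟩
end
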